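/- arXiv:1811.01652 — 2 statements merged into one kernel-verified Lean document; each statement's English description precedes it below -/
import Mathlib

section
/- Let (Ω, Σ, μ) be a measure space with a nonzero non-atomic σ-finite measure μ, and let n ≥ 2 be an integer. Then C̄_mNJ^{(n)}(L^∞(μ)) = C̄_NJ^{(n)}(L^∞(μ)) = n and C̲_mNJ^{(n)}(L^∞(μ)) = C̲_NJ^{(n)}(L^∞(μ)) = 1/n, where L^∞(μ) is the real space of essentially bounded measurable functions with the essential supremum norm. -/
open Finset MeasureTheory

noncomputable def njRatio {X : Type*} [NormedAddCommGroup X] [NormedSpace ℝ X]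
    {m : ℕ} (x0 : X) (y : Fin m → X) : ℝ :=
  (∑ ε : Fin m → Bool, ‖x0 + ∑ j, (if ε j then (1 : ℝ) else -1) • y j‖ ^ 2) /
    (2 ^ m * (‖x0‖ ^ 2 + ∑ j, ‖y j‖ ^ 2))

noncomputable def upperNJ (X : Type*) [NormedAddCommGroup X] [NormedSpace ℝ X] (n : ℕ) : ℝ :=
  sSup {c : ℝ | ∃ (x0 : X) (y : Fin (n - 1) → X),
    0 < ‖x0‖ ^ 2 + ∑ j, ‖y j‖ ^ 2 ∧ c = njRatio x0 y}

noncomputable def lowerNJ (X : Type*) [NormedAddCommGroup X] [NormedSpace ℝ X] (n : ℕ) : ℝ :=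
  sInf {c : ℝ | ∃ (x0 : X) (y : Fin (n - 1) → X),
    0 < ‖x0‖ ^ 2 + ∑ j, ‖y j‖ ^ 2 ∧ c = njRatio x0 y}

noncomputable def upperMNJ (X : Type*) [NormedAddCommGroup X] [NormedSpace ℝ X] (n : ℕ) : ℝ :=
  sSup {c : ℝ | ∃ (x0 : X) (y : Fin (n - 1) → X),
    ‖x0‖ = 1 ∧ (∀ j, ‖y j‖ = 1) ∧ c = njRatio x0 y}

noncomputable def lowerMNJ (X : Type*) [NormedAddCommGroup X] [NormedSpace ℝ X] (n : ℕ) : ℝ :=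
  sInf {c : ℝ | ∃ (x0 : X) (y : Fin (n - 1) → X),
    ‖x0‖ = 1 ∧ (∀ j, ‖y j‖ = 1) ∧ c = njRatio x0 y}

/-- A measure is non-atomic if every set of positive measure contains a measurable
subset of strictly smaller, yet positive, measure. -/
def NonatomicMeasure {Ω : Type*} [MeasurableSpace Ω] (μ : MeasureTheory.Measure Ω) : Prop :=
  ∀ A : Set Ω, MeasurableSet A → 0 < μ A →
    ∃ B : Set Ω, B ⊆ A ∧ MeasurableSet B ∧ 0 < μ B ∧ μ B < μ A

section AuxBounds
variable {X : Type*} [NormedAddCommGroup X] [NormedSpace ℝ X] {m : ℕ}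

lemma njRatio_le (x0 : X) (y : Fin m → X) (hpos : 0 < ‖x0‖ ^ 2 + ∑ j, ‖y j‖ ^ 2) :
    njRatio x0 y ≤ (m : ℝ) + 1 := by
  set D := ‖x0‖ ^ 2 + ∑ j, ‖y j‖ ^ 2 with hD
  rw [njRatio, div_le_iff₀ (by positivity)]
  have key : ∀ ε : Fin m → Bool,
      ‖x0 + ∑ j, (if ε j then (1 : ℝ) else -1) • y j‖ ^ 2 ≤ ((m : ℝ) + 1) * D := by
    intro ε
    have h1 : ‖x0 + ∑ j, (if ε j then (1 : ℝ) else -1) • y j‖ ≤ ‖x0‖ + ∑ j, ‖y j‖ := by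
      refine (norm_add_le _ _).trans (add_le_add_right ((norm_sum_le _ _).trans
        (Finset.sum_le_sum fun j _ => ?_)) _)
      rw [norm_smul]
      cases ε j <;> simp
    have h2 : (‖x0‖ + ∑ j, ‖y j‖) ^ 2 ≤ ((m : ℝ) + 1) * D := by
      have := sq_sum_le_card_mul_sum_sq (s := (Finset.univ : Finset (Fin (m+1))))
        (f := Fin.cons ‖x0‖ (fun j => ‖y j‖))
      simpa [Fin.sum_univ_succ, hD] using this
    calc ‖x0 + ∑ j, (if ε j then (1 : ℝ) else -1) • y j‖ ^ 2
        ≤ (‖x0‖ + ∑ j, ‖y j‖) ^ 2 := by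
          apply pow_le_pow_left₀ (norm_nonneg _) h1
      _ ≤ ((m : ℝ) + 1) * D := h2
  calc (∑ ε : Fin m → Bool, ‖x0 + ∑ j, (if ε j then (1 : ℝ) else -1) • y j‖ ^ 2)
      ≤ ∑ _ε : Fin m → Bool, ((m : ℝ) + 1) * D := Finset.sum_le_sum fun ε _ => key ε
    _ = ((m : ℝ) + 1) * (2 ^ m * D) := by
        rw [Finset.sum_const]
        simp [Fintype.card_fun]
        ring


lemma njRatio_ge (x0 : X) (y : Fin m → X) (hpos : 0 < ‖x0‖ ^ 2 + ∑ j, ‖y j‖ ^ 2) :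
    1 / ((m : ℝ) + 1) ≤ njRatio x0 y := by
  classical
  set s : Bool → ℝ := fun b => if b then (1 : ℝ) else -1 with hs
  set z : (Fin m → Bool) → X := fun ε => ∑ j, s (ε j) • y j with hz
  set N := ∑ ε : Fin m → Bool, ‖x0 + z ε‖ ^ 2 with hN
  have hNnn : 0 ≤ N := Finset.sum_nonneg fun ε _ => sq_nonneg _
  set D := ‖x0‖ ^ 2 + ∑ j, ‖y j‖ ^ 2 with hD
  have hcard : ∑ _ε : Fin m → Bool, (1:ℝ) = 2 ^ m := by
    simp [Finset.sum_const, Fintype.card_fun]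
  have pair : ∀ u v w : X, ‖w‖ ≤ ‖u‖ + ‖v‖ → ‖w‖ ^ 2 / 2 ≤ ‖u‖ ^ 2 + ‖v‖ ^ 2 := by
    intro u v w h
    nlinarith [sq_nonneg (‖u‖ - ‖v‖), norm_nonneg u, norm_nonneg v, norm_nonneg w]
  -- claim 0
  have claim0 : 2 ^ m * ‖x0‖ ^ 2 ≤ N := by
    have invol : Function.Involutive (fun (ε : Fin m → Bool) j => !(ε j)) := by
      intro ε; funext j; simp
    set e := invol.toPerm _ with he
    have hsum : ∑ ε : Fin m → Bool, ‖x0 + z (e ε)‖ ^ 2 = N :=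
      Fintype.sum_equiv e _ (fun ε => ‖x0 + z ε‖ ^ 2) (fun ε => rfl)
    have hpt : ∀ ε : Fin m → Bool, 2 * ‖x0‖ ^ 2 ≤ ‖x0 + z ε‖ ^ 2 + ‖x0 + z (e ε)‖ ^ 2 := by
      intro ε
      have hadd : z ε + z (e ε) = 0 := by
        show (∑ j, s (ε j) • y j) + (∑ j, s (!(ε j)) • y j) = 0
        rw [← Finset.sum_add_distrib]
        refine Finset.sum_eq_zero fun j _ => ?_
        rw [← add_smul]
        have : s (ε j) + s (!(ε j)) = 0 := by cases ε j <;> simp [hs]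
        rw [this, zero_smul]
      have hv : (x0 + z ε) + (x0 + z (e ε)) = x0 + x0 := by
        have : (x0 + z ε) + (x0 + z (e ε)) = (x0 + x0) + (z ε + z (e ε)) := by abel
        rw [this, hadd, add_zero]
      have hw : ‖x0 + x0‖ = 2 * ‖x0‖ := by rw [← two_smul ℝ x0, norm_smul]; simp
      have := pair (x0 + z ε) (x0 + z (e ε)) (x0 + x0) (by rw [← hv]; exact norm_add_le _ _)
      nlinarith [norm_nonneg x0]
    have hsumineq : ∑ ε : Fin m → Bool, (2 * ‖x0‖ ^ 2) ≤
        ∑ ε : Fin m → Bool, (‖x0 + z ε‖ ^ 2 + ‖x0 + z (e ε)‖ ^ 2) :=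
      Finset.sum_le_sum fun ε _ => hpt ε
    rw [Finset.sum_add_distrib, hsum, ← hN] at hsumineq
    have hL : ∑ _ε : Fin m → Bool, (2 * ‖x0‖ ^ 2) = 2 ^ m * (2 * ‖x0‖ ^ 2) := by
      rw [Finset.sum_const, nsmul_eq_mul, Finset.card_univ]
      simp [Fintype.card_fun]
    rw [hL] at hsumineq
    linarith
  -- claim k
  have claimk : ∀ k : Fin m, 2 ^ m * ‖y k‖ ^ 2 ≤ N := by
    intro k
    have invol : Function.Involutive (fun ε : Fin m → Bool => Function.update ε k (!(ε k))) := by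
      intro ε; funext j
      by_cases hj : j = k
      · subst hj; simp
      · simp [Function.update_of_ne hj]
    set e := invol.toPerm _ with he
    have hsum : ∑ ε : Fin m → Bool, ‖x0 + z (e ε)‖ ^ 2 = N :=
      Fintype.sum_equiv e _ (fun ε => ‖x0 + z ε‖ ^ 2) (fun ε => rfl)
    have hpt : ∀ ε : Fin m → Bool, 2 * ‖y k‖ ^ 2 ≤ ‖x0 + z ε‖ ^ 2 + ‖x0 + z (e ε)‖ ^ 2 := by
      intro ε
      have hdiff : (x0 + z ε) - (x0 + z (e ε)) = (s (ε k) - s (!(ε k))) • y k := by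
        show (x0 + ∑ j, s (ε j) • y j) -
            (x0 + ∑ j, s (Function.update ε k (!(ε k)) j) • y j) = _
        have h1 : ∀ (a b : X), (x0 + a) - (x0 + b) = a - b := by intro a b; abel
        rw [h1, ← Finset.sum_sub_distrib, Finset.sum_eq_single k]
        · rw [Function.update_self, sub_smul]
        · intro j _ hj
          rw [Function.update_of_ne hj, sub_self]
        · intro h; exact absurd (Finset.mem_univ k) h
      have hnorm : ‖(s (ε k) - s (!(ε k))) • y k‖ = 2 * ‖y k‖ := by
        rw [norm_smul]
        cases ε k <;> simp [hs] <;> norm_num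
      have := pair (x0 + z ε) (x0 + z (e ε)) ((s (ε k) - s (!(ε k))) • y k)
        (by rw [← hdiff]; exact norm_sub_le _ _)
      nlinarith [norm_nonneg (y k)]
    have hsumineq : ∑ ε : Fin m → Bool, (2 * ‖y k‖ ^ 2) ≤
        ∑ ε : Fin m → Bool, (‖x0 + z ε‖ ^ 2 + ‖x0 + z (e ε)‖ ^ 2) :=
      Finset.sum_le_sum fun ε _ => hpt ε
    rw [Finset.sum_add_distrib, hsum, ← hN] at hsumineq
    have hL : ∑ _ε : Fin m → Bool, (2 * ‖y k‖ ^ 2) = 2 ^ m * (2 * ‖y k‖ ^ 2) := by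
      rw [Finset.sum_const, nsmul_eq_mul, Finset.card_univ]
      simp [Fintype.card_fun]
    rw [hL] at hsumineq
    linarith
  -- combine
  have hcomb : 2 ^ m * D ≤ ((m : ℝ) + 1) * N := by
    have hsumk : ∑ k : Fin m, (2 ^ m * ‖y k‖ ^ 2) ≤ (m : ℝ) * N := by
      calc ∑ k : Fin m, ((2:ℝ) ^ m * ‖y k‖ ^ 2) ≤ ∑ _k : Fin m, N :=
            Finset.sum_le_sum fun k _ => claimk k
        _ = (m : ℝ) * N := by rw [Finset.sum_const]; simp
    rw [hD, mul_add, Finset.mul_sum]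
    linarith
  rw [njRatio]
  rw [div_le_div_iff₀ (by positivity) (by positivity)]
  show 1 * (2 ^ m * D) ≤ N * ((m:ℝ) + 1)
  linarith

end AuxBounds

lemma combo_eq {M : Type*} [AddCommMonoid M] [Module ℝ M] {ι κ : Type*} [Fintype ι] [Fintype κ]
    (v : ι → M) (c0 : ι → ℝ) (t : κ → ℝ) (c : κ → ι → ℝ) :
    (∑ i, c0 i • v i) + ∑ j, t j • ∑ i, c j i • v i
      = ∑ i, (c0 i + ∑ j, t j * c j i) • v i := by
  simp_rw [add_smul, Finset.sum_add_distrib, Finset.smul_sum, smul_smul, Finset.sum_smul]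
  rw [Finset.sum_comm]


section AuxMeasure
variable {Ω : Type*} [MeasurableSpace Ω] {μ : MeasureTheory.Measure Ω}

lemma exists_disjoint_aux (hμ : μ ≠ 0) (hna : NonatomicMeasure μ) (k : ℕ) :
    ∃ (A : Fin k → Set Ω) (R : Set Ω), (∀ i, MeasurableSet (A i)) ∧ (∀ i, 0 < μ (A i)) ∧
      MeasurableSet R ∧ 0 < μ R ∧ (∀ i, Disjoint (A i) R) ∧
      Pairwise (Function.onFun Disjoint A) := by
  induction k with
  | zero =>
    exact ⟨Fin.elim0, Set.univ, fun i => i.elim0, fun i => i.elim0, MeasurableSet.univ,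
      MeasureTheory.Measure.measure_univ_pos.mpr hμ, fun i => i.elim0, fun i => i.elim0⟩
  | succ k ih =>
    obtain ⟨A, R, hAm, hApos, hRm, hRpos, hAR, hAd⟩ := ih
    obtain ⟨B, hBR, hBm, hBpos, hBlt⟩ := hna R hRm hRpos
    refine ⟨Fin.snoc A B, R \ B, ?_, ?_, hRm.diff hBm, ?_, ?_, ?_⟩
    · intro i
      refine Fin.lastCases ?_ ?_ i
      · simpa using hBm
      · intro j; simpa using hAm j
    · intro i
      refine Fin.lastCases ?_ ?_ i
      · simpa using hBpos
      · intro j; simpa using hApos j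
    · -- positive measure of R \ B
      by_contra h
      push_neg at h
      have h0 : μ (R \ B) = 0 := le_antisymm h zero_le
      have : μ R ≤ μ B := by
        calc μ R = μ ((R \ B) ∪ B) := by rw [Set.diff_union_of_subset hBR]
          _ ≤ μ (R \ B) + μ B := measure_union_le _ _
          _ = μ B := by rw [h0, zero_add]
      exact absurd this hBlt.not_ge
    · intro i
      refine Fin.lastCases ?_ ?_ i
      · simpa using Set.disjoint_sdiff_right (s := B) (t := R) |>.symm.symm
      · intro j
        simpa using (hAR j).mono_right Set.diff_subset
    · intro i j hij
      rcases Fin.eq_castSucc_or_eq_last i with ⟨i', rfl⟩ | rfl <;>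
        rcases Fin.eq_castSucc_or_eq_last j with ⟨j', rfl⟩ | rfl
      · simp only [Function.onFun, Fin.snoc_castSucc]
        exact hAd (fun h => hij (by rw [h]))
      · simp only [Function.onFun, Fin.snoc_castSucc, Fin.snoc_last]
        exact (hAR i').mono_right hBR
      · simp only [Function.onFun, Fin.snoc_castSucc, Fin.snoc_last]
        exact ((hAR j').mono_right hBR).symm
      · exact absurd rfl hij

lemma exists_disjoint_sets (hμ : μ ≠ 0) (hna : NonatomicMeasure μ) [SigmaFinite μ]
    (ι : Type*) [Fintype ι] :
    ∃ A : ι → Set Ω, (∀ i, MeasurableSet (A i)) ∧ (∀ i, 0 < μ (A i)) ∧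
      (∀ i, μ (A i) ≠ ⊤) ∧ Pairwise (Function.onFun Disjoint A) := by
  obtain ⟨A, R, hAm, hApos, _, _, _, hAd⟩ :=
    exists_disjoint_aux hμ hna (Fintype.card ι)
  have key : ∀ i : Fin (Fintype.card ι), ∃ t, MeasurableSet t ∧ t ⊆ A i ∧ 0 < μ t ∧ μ t < ⊤ :=
    fun i => MeasureTheory.Measure.exists_subset_measure_lt_top (hAm i) (hApos i)
  choose T hTm hTsub hTpos hTfin using key
  set e := Fintype.equivFin ι with he
  refine ⟨fun i => T (e i), fun i => hTm _, fun i => hTpos _, fun i => (hTfin _).ne, ?_⟩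
  intro i j hij
  exact (hAd (e.injective.ne hij)).mono (hTsub _) (hTsub _)


variable {Ω : Type*} [MeasurableSpace Ω] {μ : MeasureTheory.Measure Ω}

lemma myLp_coeFn_sum {E : Type*} [NormedAddCommGroup E] {p : ENNReal} {ι : Type*}
    (s : Finset ι) (f : ι → Lp E p μ) :
    ∀ᵐ x ∂μ, (∑ i ∈ s, f i : Lp E p μ) x = ∑ i ∈ s, (f i : Ω → E) x := by
  classical
  induction s using Finset.induction_on with
  | empty =>
    filter_upwards [Lp.coeFn_zero E p μ] with x hx
    simpa using hx
  | @insert a s' hnot ih =>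
    rw [Finset.sum_insert hnot]
    filter_upwards [Lp.coeFn_add (f a) (∑ i ∈ s', f i), ih] with x hx1 hx2
    rw [hx1]
    simp only [Pi.add_apply, hx2, Finset.sum_insert hnot]

lemma norm_combo {ι : Type*} [Fintype ι] (A : ι → Set Ω)
    (hm : ∀ i, MeasurableSet (A i)) (hfin : ∀ i, μ (A i) ≠ ⊤) (hpos : ∀ i, 0 < μ (A i))
    (hdisj : Pairwise (Function.onFun Disjoint A)) (c : ι → ℝ) (C : ℝ)
    (hle : ∀ i, |c i| ≤ C) (i0 : ι) (heq : |c i0| = C) :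
    ‖∑ i, c i • (indicatorConstLp ⊤ (hm i) (hfin i) (1:ℝ) : Lp ℝ ⊤ μ)‖ = C := by
  classical
  have hC0 : 0 ≤ C := heq ▸ abs_nonneg _
  set g : Ω → ℝ := fun x => ∑ i, c i * (A i).indicator (fun _ => (1:ℝ)) x with hg
  have hae : (∑ i, c i • (indicatorConstLp ⊤ (hm i) (hfin i) (1:ℝ) : Lp ℝ ⊤ μ) : Lp ℝ ⊤ μ)
      =ᵐ[μ] g := by
    have h1 : ∀ᵐ x ∂μ, ∀ i : ι,
        (c i • (indicatorConstLp ⊤ (hm i) (hfin i) (1:ℝ) : Lp ℝ ⊤ μ) : Lp ℝ ⊤ μ) x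
          = c i * (A i).indicator (fun _ => (1:ℝ)) x := by
      rw [MeasureTheory.ae_all_iff]
      intro i
      filter_upwards [Lp.coeFn_smul (c i) (indicatorConstLp ⊤ (hm i) (hfin i) (1:ℝ)),
        indicatorConstLp_coeFn (p := (⊤ : ENNReal)) (hs := hm i) (hμs := hfin i) (c := (1:ℝ))]
        with x hx1 hx2
      rw [hx1, Pi.smul_apply, hx2, smul_eq_mul]
    filter_upwards [myLp_coeFn_sum Finset.univ
      (fun i => c i • (indicatorConstLp ⊤ (hm i) (hfin i) (1:ℝ) : Lp ℝ ⊤ μ)), h1] with x hx1 hx2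
    rw [hx1, hg]
    exact Finset.sum_congr rfl fun i _ => hx2 i
  -- pointwise values
  have hgval : ∀ i x, x ∈ A i → g x = c i := by
    intro i x hx
    show ∑ j : ι, c j * (A j).indicator (fun _ => (1:ℝ)) x = c i
    rw [Finset.sum_eq_single i]
    · rw [Set.indicator_of_mem hx, mul_one]
    · intro j _ hj
      have : x ∉ A j := Set.disjoint_right.mp (hdisj hj) hx
      rw [Set.indicator_of_notMem this, mul_zero]
    · intro h; exact absurd (Finset.mem_univ i) h
  have hbound : ∀ x, ‖g x‖ ≤ C := by
    intro x
    by_cases hx : ∃ i, x ∈ A i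
    · obtain ⟨i, hi⟩ := hx
      rw [hgval i x hi, Real.norm_eq_abs]
      exact hle i
    · push_neg at hx
      have : g x = 0 := Finset.sum_eq_zero fun j _ => by
        rw [Set.indicator_of_notMem (hx j), mul_zero]
      rw [this]; simpa using hC0
  have hess : eLpNormEssSup g μ = ENNReal.ofReal C := by
    refine le_antisymm (eLpNormEssSup_le_of_ae_bound (ae_of_all _ hbound)) ?_
    by_contra hlt
    push_neg at hlt
    have hlt' : eLpNormEssSup g μ < ENNReal.ofReal C := hlt
    have hae2 : ∀ᵐ x ∂μ, (‖g x‖₊ : ENNReal) < ENNReal.ofReal C :=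
      ae_lt_of_essSup_lt hlt'
    have hnull : μ {x | ¬ ((‖g x‖₊ : ENNReal) < ENNReal.ofReal C)} = 0 := by
      rw [← MeasureTheory.ae_iff]; exact hae2
    have hsub : A i0 ⊆ {x | ¬ ((‖g x‖₊ : ENNReal) < ENNReal.ofReal C)} := by
      intro x hx
      simp only [Set.mem_setOf_eq, not_lt]
      have : g x = c i0 := hgval i0 x hx
      rw [this]
      rw [← enorm_eq_nnnorm, ← ofReal_norm, Real.norm_eq_abs, heq]
    exact absurd (measure_mono_null hsub hnull) (hpos i0).ne'
  rw [Lp.norm_def, eLpNorm_congr_ae hae, eLpNorm_exponent_top, hess, ENNReal.toReal_ofReal hC0]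

end AuxMeasure

section AuxConstr
variable {Ω : Type*} [MeasurableSpace Ω] {μ : MeasureTheory.Measure Ω} [SigmaFinite μ]

lemma exists_upper (hμ : μ ≠ 0) (hna : NonatomicMeasure μ) (m : ℕ) :
    ∃ (x0 : Lp ℝ ⊤ μ) (y : Fin m → Lp ℝ ⊤ μ), ‖x0‖ = 1 ∧ (∀ j, ‖y j‖ = 1) ∧
      njRatio x0 y = (m : ℝ) + 1 := by
  classical
  obtain ⟨A, hm, hpos, hfin, hdisj⟩ := exists_disjoint_sets hμ hna (Fin m → Bool)
  set ind : (Fin m → Bool) → Lp ℝ ⊤ μ :=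
    fun i => indicatorConstLp ⊤ (hm i) (hfin i) (1 : ℝ) with hind
  set c0 : (Fin m → Bool) → ℝ := fun _ => 1 with hc0
  set cy : Fin m → (Fin m → Bool) → ℝ := fun j ε => if ε j then 1 else -1 with hcy
  refine ⟨∑ i, c0 i • ind i, fun j => ∑ i, cy j i • ind i, ?_, ?_, ?_⟩
  · exact norm_combo A hm hfin hpos hdisj c0 1 (fun i => by simp [hc0]) (fun _ => false)
      (by simp [hc0])
  · intro j
    refine norm_combo A hm hfin hpos hdisj (cy j) 1 (fun i => ?_) (fun _ => false) ?_
    · simp only [hcy]; split <;> norm_num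
    · simp only [hcy]; norm_num
  · have hnorm : ∀ θ : Fin m → Bool,
        ‖(∑ i, c0 i • ind i) + ∑ j, (if θ j then (1:ℝ) else -1) • ∑ i, cy j i • ind i‖
          = (m : ℝ) + 1 := by
      intro θ
      rw [combo_eq]
      refine norm_combo A hm hfin hpos hdisj _ ((m : ℝ) + 1) (fun ε => ?_) θ ?_
      · have habs : ∀ a b : Bool, |(if a then (1:ℝ) else -1) * (if b then (1:ℝ) else -1)| = 1 :=
          by intro a b; cases a <;> cases b <;> norm_num
        calc |c0 ε + ∑ j, (if θ j then (1:ℝ) else -1) * cy j ε|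
            ≤ |c0 ε| + |∑ j, (if θ j then (1:ℝ) else -1) * cy j ε| := abs_add_le _ _
          _ ≤ 1 + ∑ j, |(if θ j then (1:ℝ) else -1) * cy j ε| := by
              refine add_le_add (by simp [hc0]) (Finset.abs_sum_le_sum_abs _ _)
          _ = 1 + ∑ _j : Fin m, (1:ℝ) := by
              refine congrArg _ (Finset.sum_congr rfl fun j _ => habs (θ j) (ε j))
          _ = (m:ℝ) + 1 := by simp [add_comm]
      · have : c0 θ + ∑ j, (if θ j then (1:ℝ) else -1) * cy j θ = (m:ℝ) + 1 := by
          have : ∀ j : Fin m, (if θ j then (1:ℝ) else -1) * cy j θ = 1 := by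
            intro j; simp only [hcy]; cases θ j <;> norm_num
          rw [Finset.sum_congr rfl fun j _ => this j]
          simp [hc0, add_comm]
        rw [this, abs_of_nonneg (by positivity)]
    have hx0 : ‖(∑ i, c0 i • ind i : Lp ℝ ⊤ μ)‖ = 1 :=
      norm_combo A hm hfin hpos hdisj c0 1 (fun i => by simp [hc0]) (fun _ => false)
        (by simp [hc0])
    have hy : ∀ j, ‖(∑ i, cy j i • ind i : Lp ℝ ⊤ μ)‖ = 1 := by
      intro j
      refine norm_combo A hm hfin hpos hdisj (cy j) 1 (fun i => ?_) (fun _ => false) ?_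
      · simp only [hcy]; split <;> norm_num
      · simp only [hcy]; norm_num
    rw [njRatio]
    have hnum : ∑ θ : Fin m → Bool,
        ‖(∑ i, c0 i • ind i) + ∑ j, (if θ j then (1:ℝ) else -1) • ∑ i, cy j i • ind i‖ ^ 2
        = 2 ^ m * ((m:ℝ) + 1) ^ 2 := by
      rw [Finset.sum_congr rfl fun θ _ => by rw [hnorm θ]]
      rw [Finset.sum_const, nsmul_eq_mul, Finset.card_univ]
      simp [Fintype.card_fun]
    rw [hnum, hx0]
    rw [Finset.sum_congr rfl fun j (_ : j ∈ Finset.univ) => by rw [hy j]]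
    rw [Finset.sum_const, nsmul_eq_mul, Finset.card_univ]
    simp only [Fintype.card_fin, one_pow, mul_one]
    have h1 : (1:ℝ) + (m:ℝ) ≠ 0 := by positivity
    field_simp
    ring

lemma exists_lower (hμ : μ ≠ 0) (hna : NonatomicMeasure μ) (m : ℕ) :
    ∃ (x0 : Lp ℝ ⊤ μ) (y : Fin m → Lp ℝ ⊤ μ), ‖x0‖ = 1 ∧ (∀ j, ‖y j‖ = 1) ∧
      njRatio x0 y = 1 / ((m : ℝ) + 1) := by
  classical
  obtain ⟨A, hm, hpos, hfin, hdisj⟩ := exists_disjoint_sets hμ hna (Fin (m + 1))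
  set ind : Fin (m + 1) → Lp ℝ ⊤ μ :=
    fun i => indicatorConstLp ⊤ (hm i) (hfin i) (1 : ℝ) with hind
  set c0 : Fin (m + 1) → ℝ := fun i => if i = 0 then 1 else 0 with hc0
  set cy : Fin m → Fin (m + 1) → ℝ := fun j i => if i = j.succ then 1 else 0 with hcy
  have hx0 : ‖(∑ i, c0 i • ind i : Lp ℝ ⊤ μ)‖ = 1 := by
    refine norm_combo A hm hfin hpos hdisj c0 1 (fun i => ?_) 0 (by simp [hc0])
    simp only [hc0]; split <;> norm_num
  have hy : ∀ j, ‖(∑ i, cy j i • ind i : Lp ℝ ⊤ μ)‖ = 1 := by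
    intro j
    refine norm_combo A hm hfin hpos hdisj (cy j) 1 (fun i => ?_) j.succ (by simp [hcy])
    simp only [hcy]; split <;> norm_num
  refine ⟨∑ i, c0 i • ind i, fun j => ∑ i, cy j i • ind i, hx0, hy, ?_⟩
  have hnorm : ∀ θ : Fin m → Bool,
      ‖(∑ i, c0 i • ind i) + ∑ j, (if θ j then (1:ℝ) else -1) • ∑ i, cy j i • ind i‖
        = 1 := by
    intro θ
    rw [combo_eq]
    set d : Fin (m + 1) → ℝ := fun i => c0 i + ∑ j, (if θ j then (1:ℝ) else -1) * cy j i
      with hd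
    have hd0 : d 0 = 1 := by
      have hz : ∀ j ∈ Finset.univ, (if θ j then (1:ℝ) else -1) * cy j 0 = 0 := by
        intro j _
        have : cy j 0 = 0 := by simp [hcy, Ne.symm (Fin.succ_ne_zero j)]
        rw [this, mul_zero]
      show c0 0 + ∑ j, (if θ j then (1:ℝ) else -1) * cy j 0 = 1
      rw [Finset.sum_eq_zero hz, add_zero, hc0]
      simp
    have hdsucc : ∀ k : Fin m, d k.succ = (if θ k then (1:ℝ) else -1) := by
      intro k
      have h1 : c0 k.succ = 0 := by simp [hc0, Fin.succ_ne_zero k]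
      have h2 : ∑ j, (if θ j then (1:ℝ) else -1) * cy j k.succ
          = (if θ k then (1:ℝ) else -1) := by
        rw [Finset.sum_eq_single k]
        · simp [hcy]
        · intro j _ hj
          have : cy j k.succ = 0 := by
            simp [hcy, Fin.succ_inj, (Ne.symm hj : k ≠ j)]
          rw [this, mul_zero]
        · intro h; exact absurd (Finset.mem_univ k) h
      show c0 k.succ + ∑ j, (if θ j then (1:ℝ) else -1) * cy j k.succ = _
      rw [h1, h2, zero_add]
    refine norm_combo A hm hfin hpos hdisj d 1 (fun i => ?_) 0 (by rw [hd0]; norm_num)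
    refine Fin.cases ?_ ?_ i
    · rw [hd0]; norm_num
    · intro k
      rw [hdsucc k]
      split <;> norm_num
  rw [njRatio]
  rw [Finset.sum_congr rfl fun θ (_ : θ ∈ Finset.univ) => by rw [hnorm θ]]
  rw [Finset.sum_const, nsmul_eq_mul, Finset.card_univ, hx0]
  rw [Finset.sum_congr rfl fun j (_ : j ∈ Finset.univ) => by rw [hy j]]
  rw [Finset.sum_const, nsmul_eq_mul, Finset.card_univ]
  simp only [Fintype.card_fin, Fintype.card_fun, Fintype.card_bool, one_pow, mul_one]
  push_cast
  have h1 : (1:ℝ) + (m:ℝ) ≠ 0 := by positivity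
  have h2 : (2:ℝ) ^ m ≠ 0 := by positivity
  field_simp
  ring

end AuxConstr

theorem stmt_13 {Ω : Type*} [MeasurableSpace Ω] (μ : Measure Ω) [SigmaFinite μ]
    (hμ : μ ≠ 0) (hna : NonatomicMeasure μ) (n : ℕ) (hn : 2 ≤ n) :
    (upperMNJ (Lp ℝ ⊤ μ) n = (n : ℝ) ∧ upperNJ (Lp ℝ ⊤ μ) n = (n : ℝ)) ∧
    (lowerMNJ (Lp ℝ ⊤ μ) n = 1 / (n : ℝ) ∧ lowerNJ (Lp ℝ ⊤ μ) n = 1 / (n : ℝ)) := by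
  classical
  have hcast : ((n - 1 : ℕ) : ℝ) + 1 = (n : ℝ) := by
    have h1 : ((n - 1 : ℕ) : ℝ) = (n : ℝ) - 1 := by
      rw [Nat.cast_sub (by omega)]; simp
    rw [h1]; ring
  obtain ⟨xu, yu, hxu, hyu, hru⟩ := exists_upper hμ hna (n - 1)
  obtain ⟨xl, yl, hxl, hyl, hrl⟩ := exists_lower hμ hna (n - 1)
  have hposu : 0 < ‖xu‖ ^ 2 + ∑ j, ‖yu j‖ ^ 2 := by
    have hs : 0 ≤ ∑ j, ‖yu j‖ ^ 2 := Finset.sum_nonneg fun j _ => sq_nonneg _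
    rw [hxu]; nlinarith
  have hposl : 0 < ‖xl‖ ^ 2 + ∑ j, ‖yl j‖ ^ 2 := by
    have hs : 0 ≤ ∑ j, ‖yl j‖ ^ 2 := Finset.sum_nonneg fun j _ => sq_nonneg _
    rw [hxl]; nlinarith
  constructor
  · constructor
    · -- upperMNJ
      rw [upperMNJ]
      have hub : ∀ c ∈ {c : ℝ | ∃ (x0 : Lp ℝ ⊤ μ) (y : Fin (n - 1) → Lp ℝ ⊤ μ),
          ‖x0‖ = 1 ∧ (∀ j, ‖y j‖ = 1) ∧ c = njRatio x0 y}, c ≤ (n : ℝ) := by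
        rintro c ⟨x0, y, h1, h2, rfl⟩
        have hp : 0 < ‖x0‖ ^ 2 + ∑ j, ‖y j‖ ^ 2 := by
          have hs : 0 ≤ ∑ j, ‖y j‖ ^ 2 := Finset.sum_nonneg fun j _ => sq_nonneg _
          rw [h1]; nlinarith
        exact hcast ▸ njRatio_le x0 y hp
      have hmem : (n : ℝ) ∈ {c : ℝ | ∃ (x0 : Lp ℝ ⊤ μ) (y : Fin (n - 1) → Lp ℝ ⊤ μ),
          ‖x0‖ = 1 ∧ (∀ j, ‖y j‖ = 1) ∧ c = njRatio x0 y} :=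
        ⟨xu, yu, hxu, hyu, by rw [hru, hcast]⟩
      exact le_antisymm (csSup_le ⟨_, hmem⟩ hub) (le_csSup ⟨_, hub⟩ hmem)
    · rw [upperNJ]
      have hub : ∀ c ∈ {c : ℝ | ∃ (x0 : Lp ℝ ⊤ μ) (y : Fin (n - 1) → Lp ℝ ⊤ μ),
          0 < ‖x0‖ ^ 2 + ∑ j, ‖y j‖ ^ 2 ∧ c = njRatio x0 y}, c ≤ (n : ℝ) := by
        rintro c ⟨x0, y, hp, rfl⟩
        exact hcast ▸ njRatio_le x0 y hp
      have hmem : (n : ℝ) ∈ {c : ℝ | ∃ (x0 : Lp ℝ ⊤ μ) (y : Fin (n - 1) → Lp ℝ ⊤ μ),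
          0 < ‖x0‖ ^ 2 + ∑ j, ‖y j‖ ^ 2 ∧ c = njRatio x0 y} :=
        ⟨xu, yu, hposu, by rw [hru, hcast]⟩
      exact le_antisymm (csSup_le ⟨_, hmem⟩ hub) (le_csSup ⟨_, hub⟩ hmem)
  · constructor
    · rw [lowerMNJ]
      have hlb : ∀ c ∈ {c : ℝ | ∃ (x0 : Lp ℝ ⊤ μ) (y : Fin (n - 1) → Lp ℝ ⊤ μ),
          ‖x0‖ = 1 ∧ (∀ j, ‖y j‖ = 1) ∧ c = njRatio x0 y}, 1 / (n : ℝ) ≤ c := by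
        rintro c ⟨x0, y, h1, h2, rfl⟩
        have hp : 0 < ‖x0‖ ^ 2 + ∑ j, ‖y j‖ ^ 2 := by
          have hs : 0 ≤ ∑ j, ‖y j‖ ^ 2 := Finset.sum_nonneg fun j _ => sq_nonneg _
          rw [h1]; nlinarith
        exact hcast ▸ njRatio_ge x0 y hp
      have hmem : 1 / (n : ℝ) ∈ {c : ℝ | ∃ (x0 : Lp ℝ ⊤ μ) (y : Fin (n - 1) → Lp ℝ ⊤ μ),
          ‖x0‖ = 1 ∧ (∀ j, ‖y j‖ = 1) ∧ c = njRatio x0 y} :=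
        ⟨xl, yl, hxl, hyl, by rw [hrl, hcast]⟩
      exact le_antisymm (csInf_le ⟨_, hlb⟩ hmem) (le_csInf ⟨_, hmem⟩ hlb)
    · rw [lowerNJ]
      have hlb : ∀ c ∈ {c : ℝ | ∃ (x0 : Lp ℝ ⊤ μ) (y : Fin (n - 1) → Lp ℝ ⊤ μ),
          0 < ‖x0‖ ^ 2 + ∑ j, ‖y j‖ ^ 2 ∧ c = njRatio x0 y}, 1 / (n : ℝ) ≤ c := by
        rintro c ⟨x0, y, hp, rfl⟩
        exact hcast ▸ njRatio_ge x0 y hp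
      have hmem : 1 / (n : ℝ) ∈ {c : ℝ | ∃ (x0 : Lp ℝ ⊤ μ) (y : Fin (n - 1) → Lp ℝ ⊤ μ),
          0 < ‖x0‖ ^ 2 + ∑ j, ‖y j‖ ^ 2 ∧ c = njRatio x0 y} :=
        ⟨xl, yl, hposl, by rw [hrl, hcast]⟩
      exact le_antisymm (csInf_le ⟨_, hlb⟩ hmem) (le_csInf ⟨_, hmem⟩ hlb)
end

section
/- A nontrivial real Banach space X is B-convex if and only if there exists an integer n ≥ 2 such that C̄_mNJ^{(n)}(X) < n. -/
/-!
Write `n = m + 1` and `s_ε = x₀ ± y₀ ± ⋯ ± y_{m-1}`; for unit vectors the ratio is the mean of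
`‖s_ε‖² / n` over the `2^m` sign patterns, and each `‖s_ε‖ ≤ n`.

If `X` is uniformly non-`l_n^1` with constant `δ`, one of the `2^m` terms is at most
`(n (1 - δ))²`, which keeps the ratio a fixed amount below `n`.

Conversely, the defect `(1 - ‖x₀‖) + ∑ (1 - ‖y j‖)` of a family in the unit ball is at most
`n - ‖s_ε‖` for every `ε`. So if all signed sums exceed `n (1 - δ)`, replacing each vector by a unit
vector at distance `1 - ‖·‖` moves every signed sum by less than `n δ`, and the ratio of the new
unit family is at least `n (1 - 2δ)² ≥ n (1 - 4δ)`, which exceeds `C̄_mNJ^{(n)}(X)` for small `δ`.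
-/

open Finset MeasureTheory

/-- A Banach space is uniformly non-`l_n^1` if there is `δ > 0` such that for all
`x_1, …, x_n` in the closed unit ball, some choice of signs gives
`‖x_1 ± x_2 ± ⋯ ± x_n‖ ≤ n (1 - δ)`. -/
def UniformlyNonL1 (X : Type*) [NormedAddCommGroup X] [NormedSpace ℝ X] (n : ℕ) : Prop :=
  ∃ δ : ℝ, 0 < δ ∧ ∀ (x0 : X) (y : Fin (n - 1) → X), ‖x0‖ ≤ 1 → (∀ j, ‖y j‖ ≤ 1) →
    ∃ ε : Fin (n - 1) → Bool,
      ‖x0 + ∑ j, (if ε j then (1 : ℝ) else -1) • y j‖ ≤ n * (1 - δ)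

/-- A Banach space is B-convex if it is uniformly non-l_n^1 for some integer n ≥ 2. -/
def BConvex (X : Type*) [NormedAddCommGroup X] [NormedSpace ℝ X] : Prop :=
  ∃ n : ℕ, 2 ≤ n ∧ UniformlyNonL1 X n

section SignedSums

variable {X : Type*} [NormedAddCommGroup X] [NormedSpace ℝ X] {m : ℕ}

noncomputable def signedSum (x0 : X) (y : Fin m → X) (ε : Fin m → Bool) : X :=
  x0 + ∑ j, (if ε j then (1 : ℝ) else -1) • y j

lemma signedSum_sub (x0 x0' : X) (y y' : Fin m → X) (ε : Fin m → Bool) :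
    signedSum x0 y ε - signedSum x0' y' ε = signedSum (x0 - x0') (y - y') ε := by
  simp only [signedSum, Pi.sub_apply, smul_sub, sum_sub_distrib]
  abel

lemma norm_signedSum_le (x0 : X) (y : Fin m → X) (ε : Fin m → Bool) :
    ‖signedSum x0 y ε‖ ≤ ‖x0‖ + ∑ j, ‖y j‖ := by
  refine (norm_add_le _ _).trans (add_le_add_right ((norm_sum_le _ _).trans_eq ?_) _)
  refine sum_congr rfl fun j _ => ?_
  cases ε j <;> simp

lemma norm_signedSum_le_of_norm_le_one {x0 : X} {y : Fin m → X} (hx : ‖x0‖ ≤ 1)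
    (hy : ∀ j, ‖y j‖ ≤ 1) (ε : Fin m → Bool) : ‖signedSum x0 y ε‖ ≤ m + 1 := by
  calc ‖signedSum x0 y ε‖ ≤ ‖x0‖ + ∑ j, ‖y j‖ := norm_signedSum_le x0 y ε
    _ ≤ 1 + ∑ _j : Fin m, 1 := by gcongr with j; exact hy j
    _ = m + 1 := by simp [add_comm]

lemma defect_le_sub_norm_signedSum (x0 : X) (y : Fin m → X) (ε : Fin m → Bool) :
    (1 - ‖x0‖) + ∑ j, (1 - ‖y j‖) ≤ (m + 1) - ‖signedSum x0 y ε‖ := by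
  have := norm_signedSum_le x0 y ε
  simp only [sum_sub_distrib, sum_const, card_univ, Fintype.card_fin, nsmul_eq_mul, mul_one]
  linarith

lemma exists_norm_eq_one_norm_sub_le [Nontrivial X] {x : X} (hx : ‖x‖ ≤ 1) :
    ∃ u : X, ‖u‖ = 1 ∧ ‖u - x‖ ≤ 1 - ‖x‖ := by
  rcases eq_or_ne x 0 with rfl | hx0
  · obtain ⟨u, hu⟩ := exists_norm_eq X zero_le_one
    exact ⟨u, hu, by simp [hu]⟩
  · refine ⟨NormedSpace.normalize x, NormedSpace.norm_normalize_eq_one_iff.mpr hx0, le_of_eq ?_⟩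
    have hux : NormedSpace.normalize x - x = (1 - ‖x‖) • NormedSpace.normalize x := by
      rw [sub_smul, one_smul, NormedSpace.norm_smul_normalize]
    rw [hux, norm_smul, NormedSpace.norm_normalize_eq_one_iff.mpr hx0, mul_one,
      Real.norm_of_nonneg (sub_nonneg.mpr hx)]

lemma exists_norm_eq_one_norm_signedSum_ge [Nontrivial X] {x0 : X} {y : Fin m → X}
    (hx : ‖x0‖ ≤ 1) (hy : ∀ j, ‖y j‖ ≤ 1) :
    ∃ (u0 : X) (v : Fin m → X), ‖u0‖ = 1 ∧ (∀ j, ‖v j‖ = 1) ∧ ∀ ε,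
      ‖signedSum x0 y ε‖ - ((1 - ‖x0‖) + ∑ j, (1 - ‖y j‖)) ≤ ‖signedSum u0 v ε‖ := by
  obtain ⟨u0, hu0, hu0x⟩ := exists_norm_eq_one_norm_sub_le hx
  choose v hv hvy using fun j => exists_norm_eq_one_norm_sub_le (hy j)
  refine ⟨u0, v, hu0, hv, fun ε => ?_⟩
  have hclose : ‖signedSum u0 v ε - signedSum x0 y ε‖ ≤ (1 - ‖x0‖) + ∑ j, (1 - ‖y j‖) := by
    rw [signedSum_sub]
    refine (norm_signedSum_le _ _ ε).trans (add_le_add hu0x (sum_le_sum fun j _ => hvy j))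
  linarith [norm_sub_norm_le (signedSum x0 y ε) (signedSum u0 v ε), norm_sub_rev
    (signedSum u0 v ε) (signedSum x0 y ε)]

end SignedSums

section RatioOfUnitVectors

variable {X : Type*} [NormedAddCommGroup X] [NormedSpace ℝ X] {m : ℕ}

lemma njRatio_nonneg (x0 : X) (y : Fin m → X) : 0 ≤ njRatio x0 y := by
  unfold njRatio
  positivity

lemma njRatio_of_norm_eq_one {x0 : X} {y : Fin m → X} (hx : ‖x0‖ = 1) (hy : ∀ j, ‖y j‖ = 1) :
    njRatio x0 y = (∑ ε, ‖signedSum x0 y ε‖ ^ 2) / (2 ^ m * (m + 1)) := by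
  simp [njRatio, signedSum, hx, hy, add_comm]

lemma njRatio_le_of_norm_signedSum_le {x0 : X} {y : Fin m → X} (hx : ‖x0‖ = 1)
    (hy : ∀ j, ‖y j‖ = 1) {ε₀ : Fin m → Bool} {r : ℝ} (hr : ‖signedSum x0 y ε₀‖ ≤ r) :
    njRatio x0 y ≤ (m + 1) - ((m + 1) ^ 2 - r ^ 2) / (2 ^ m * (m + 1)) := by
  have hsq : ∀ ε, ‖signedSum x0 y ε‖ ^ 2 ≤ ((m : ℝ) + 1) ^ 2 := fun ε =>
    pow_le_pow_left₀ (norm_nonneg _)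
      (norm_signedSum_le_of_norm_le_one hx.le (fun j => (hy j).le) ε) 2
  have hcard : ((univ.erase ε₀).card : ℝ) = 2 ^ m - 1 := by
    rw [card_erase_of_mem (mem_univ _), card_univ, Fintype.card_fun, Fintype.card_bool,
      Fintype.card_fin, Nat.cast_sub Nat.one_le_two_pow]
    norm_num
  have hsum : ∑ ε, ‖signedSum x0 y ε‖ ^ 2 ≤ r ^ 2 + (2 ^ m - 1) * ((m : ℝ) + 1) ^ 2 := by
    rw [← add_sum_erase _ _ (mem_univ ε₀)]
    exact add_le_add (pow_le_pow_left₀ (norm_nonneg _) hr 2)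
      ((sum_le_sum fun ε _ => hsq ε).trans_eq (by rw [sum_const, nsmul_eq_mul, hcard]))
  rw [njRatio_of_norm_eq_one hx hy, div_le_iff₀ (by positivity)]
  calc _ ≤ r ^ 2 + (2 ^ m - 1) * ((m : ℝ) + 1) ^ 2 := hsum
    _ = _ := by field_simp; ring

lemma njRatio_le_of_norm_eq_one {x0 : X} {y : Fin m → X} (hx : ‖x0‖ = 1)
    (hy : ∀ j, ‖y j‖ = 1) : njRatio x0 y ≤ m + 1 := by
  simpa using njRatio_le_of_norm_signedSum_le hx hy (ε₀ := fun _ => true)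
    (norm_signedSum_le_of_norm_le_one hx.le (fun j => (hy j).le) _)

lemma sq_div_le_njRatio {x0 : X} {y : Fin m → X} (hx : ‖x0‖ = 1) (hy : ∀ j, ‖y j‖ = 1)
    {r : ℝ} (hr : 0 ≤ r) (hle : ∀ ε, r ≤ ‖signedSum x0 y ε‖) :
    r ^ 2 / (m + 1) ≤ njRatio x0 y := by
  rw [njRatio_of_norm_eq_one hx hy, le_div_iff₀ (by positivity)]
  calc r ^ 2 / (m + 1) * (2 ^ m * (m + 1)) = ∑ _ε : Fin m → Bool, r ^ 2 := by
        simp only [sum_const, card_univ, Fintype.card_fun, Fintype.card_bool, Fintype.card_fin,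
          nsmul_eq_mul]
        push_cast
        field_simp
    _ ≤ ∑ ε, ‖signedSum x0 y ε‖ ^ 2 := sum_le_sum fun ε _ => pow_le_pow_left₀ hr (hle ε) 2

end RatioOfUnitVectors

section UpperConstant

variable {X : Type*} [NormedAddCommGroup X] [NormedSpace ℝ X] {m : ℕ}

lemma njRatio_le_upperMNJ {x0 : X} {y : Fin m → X} (hx : ‖x0‖ = 1) (hy : ∀ j, ‖y j‖ = 1) :
    njRatio x0 y ≤ upperMNJ X (m + 1) :=
  le_csSup ⟨m + 1, by rintro _ ⟨x0, y, hx, hy, rfl⟩; exact njRatio_le_of_norm_eq_one hx hy⟩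
    ⟨x0, y, hx, hy, rfl⟩

lemma upperMNJ_le [Nontrivial X] {c : ℝ}
    (h : ∀ (x0 : X) (y : Fin m → X), ‖x0‖ = 1 → (∀ j, ‖y j‖ = 1) → njRatio x0 y ≤ c) :
    upperMNJ X (m + 1) ≤ c := by
  obtain ⟨u, hu⟩ := exists_norm_eq X zero_le_one
  refine csSup_le ⟨_, u, fun _ => u, hu, fun _ => hu, rfl⟩ ?_
  rintro _ ⟨x0, y, hx, hy, rfl⟩
  exact h x0 y hx hy

lemma upperMNJ_nonneg : 0 ≤ upperMNJ X (m + 1) :=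
  Real.sSup_nonneg <| by rintro _ ⟨x0, y, -, -, rfl⟩; exact njRatio_nonneg x0 y

lemma upperMNJ_lt_of_uniformlyNonL1 [Nontrivial X] (h : UniformlyNonL1 X (m + 1)) :
    upperMNJ X (m + 1) < m + 1 := by
  obtain ⟨δ, hδ, hU⟩ := h
  set r : ℝ := (m + 1) * (1 - min δ 1)
  have hr0 : 0 ≤ r := mul_nonneg (by positivity) (sub_nonneg.mpr (min_le_right _ _))
  have hrm : r < m + 1 := mul_lt_of_lt_one_right (by positivity) (by simp [hδ])
  have hgap : 0 < ((m + 1) ^ 2 - r ^ 2) / (2 ^ m * ((m : ℝ) + 1)) :=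
    div_pos (by nlinarith) (by positivity)
  refine (upperMNJ_le fun x0 y hx hy => ?_).trans_lt (sub_lt_self _ hgap)
  obtain ⟨ε₀, hε₀⟩ := hU x0 y hx.le fun j => (hy j).le
  refine njRatio_le_of_norm_signedSum_le hx hy (ε₀ := ε₀) (hε₀.trans ?_)
  push_cast
  exact mul_le_mul_of_nonneg_left (by linarith [min_le_left δ 1]) (by positivity)

lemma uniformlyNonL1_of_upperMNJ_lt [Nontrivial X] (h : upperMNJ X (m + 1) < m + 1) :
    UniformlyNonL1 X (m + 1) := by
  set s := upperMNJ X (m + 1)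
  have hs : 0 ≤ s := upperMNJ_nonneg
  set δ : ℝ := (m + 1 - s) / (8 * (m + 1))
  have hδ : 0 < δ := div_pos (by linarith) (by positivity)
  have hδ8 : 8 * (m + 1) * δ = m + 1 - s := by simp only [δ]; field_simp
  -- `Fin (m + 1 - 1)` is definitionally `Fin m`
  refine ⟨δ, hδ, fun x0 (y : Fin m → X) hx (hy : ∀ j, ‖y j‖ ≤ 1) => ?_⟩
  by_contra! hlarge
  change ∀ ε, ((m + 1 : ℕ) : ℝ) * (1 - δ) < ‖signedSum x0 y ε‖ at hlarge
  push_cast at hlarge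
  have hdefect := defect_le_sub_norm_signedSum x0 y (fun _ => true)
  have hlarge₀ := hlarge fun _ => true
  obtain ⟨u0, v, hu0, hv, huv⟩ := exists_norm_eq_one_norm_signedSum_ge hx hy
  have hsums : ∀ ε, (m + 1) * (1 - 2 * δ) ≤ ‖signedSum u0 v ε‖ := fun ε => by
    linarith [huv ε, hlarge ε]
  have hratio := sq_div_le_njRatio hu0 hv (by nlinarith) hsums
  have hsq : (m + 1) * (1 - 4 * δ) ≤ ((m + 1) * (1 - 2 * δ)) ^ 2 / (m + 1) := by
    rw [le_div_iff₀ (by positivity)]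
    nlinarith [sq_nonneg ((m + 1 : ℝ) * δ)]
  linarith [njRatio_le_upperMNJ hu0 hv]

lemma uniformlyNonL1_iff_upperMNJ_lt [Nontrivial X] :
    UniformlyNonL1 X (m + 1) ↔ upperMNJ X (m + 1) < m + 1 :=
  ⟨upperMNJ_lt_of_uniformlyNonL1, uniformlyNonL1_of_upperMNJ_lt⟩

end UpperConstant

theorem stmt_15_general (X : Type*) [NormedAddCommGroup X] [NormedSpace ℝ X]
    [Nontrivial X] :
    BConvex X ↔ ∃ n : ℕ, 2 ≤ n ∧ upperMNJ X n < n := by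
  refine exists_congr fun n => and_congr_right fun hn => ?_
  obtain ⟨m, rfl⟩ : ∃ m, n = m + 1 := ⟨n - 1, by omega⟩
  push_cast
  exact uniformlyNonL1_iff_upperMNJ_lt

theorem stmt_15 (X : Type*) [NormedAddCommGroup X] [NormedSpace ℝ X] [CompleteSpace X]
    [Nontrivial X] :
    BConvex X ↔ ∃ n : ℕ, 2 ≤ n ∧ upperMNJ X n < n :=
  stmt_15_general X
end
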